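/- For all t > 0: coth²(t) - 1/3 - (16/81)t² ≤ coth(t)/t ≤ coth²(t) - 1/3. -/

import Mathlib

/-!
Put `x = 2t`. Then `coth² t - 1/3 - coth t / t = D(x) / (6 t sinh² t)`, where
`D(x) = 2x + x cosh x - 3 sinh x = ∑ₙ (2n+2) x^(2n+5) / (2n+5)!`.
The Taylor coefficients of `D` are nonnegative, which is the upper bound. The lower bound says
`D(x) ≤ (2/27) x³ (cosh x - 1) = ∑ₙ (2/27) x^(2n+5) / (2n+2)!`, which holds coefficientwise
because `27 (2n+2) ≤ 2 (2n+3)(2n+4)(2n+5)`.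
-/

open Nat Real

namespace Real

lemma hasSum_two_mul_add_mul_cosh_sub_three_mul_sinh (x : ℝ) :
    HasSum (fun n : ℕ => (2 * n + 2) * x ^ (2 * n + 5) / (2 * n + 5)!)
      (2 * x + x * cosh x - 3 * sinh x) := by
  have h := (hasSum_nat_add_iff' 2).2
    (((hasSum_cosh x).mul_left x).sub ((hasSum_sinh x).mul_left 3))
  have hval : x * cosh x - 3 * sinh x -
      ∑ i ∈ Finset.range 2, (x * (x ^ (2 * i) / (2 * i)!) - 3 * (x ^ (2 * i + 1) / (2 * i + 1)!)) =
      2 * x + x * cosh x - 3 * sinh x := by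
    norm_num [Finset.sum_range_succ, factorial]
    ring
  have hterm (n : ℕ) : x * (x ^ (2 * (n + 2)) / (2 * (n + 2))!) -
      3 * (x ^ (2 * (n + 2) + 1) / (2 * (n + 2) + 1)!) =
      (2 * n + 2) * x ^ (2 * n + 5) / (2 * n + 5)! := by
    rw [show 2 * (n + 2) + 1 = 2 * n + 5 by ring, show 2 * (n + 2) = 2 * n + 4 by ring,
      factorial_succ (2 * n + 4)]
    push_cast
    field_simp
    ring
  rwa [hval, funext hterm] at h

lemma hasSum_pow_three_mul_cosh_sub_one (x : ℝ) :
    HasSum (fun n : ℕ => x ^ (2 * n + 5) / (2 * n + 2)!) (x ^ 3 * (cosh x - 1)) := by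
  have h := ((hasSum_nat_add_iff' 1).2 (hasSum_cosh x)).mul_left (x ^ 3)
  have hterm (n : ℕ) :
      x ^ 3 * (x ^ (2 * (n + 1)) / (2 * (n + 1))!) = x ^ (2 * n + 5) / (2 * n + 2)! := by
    rw [show 2 * (n + 1) = 2 * n + 2 by ring]
    ring
  simpa [funext hterm] using h

variable {x : ℝ}

lemma three_mul_sinh_le (hx : 0 ≤ x) : 3 * sinh x ≤ 2 * x + x * cosh x :=
  sub_nonneg.1 <| (hasSum_two_mul_add_mul_cosh_sub_three_mul_sinh x).nonneg fun _ => by positivity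

lemma two_mul_add_mul_cosh_sub_three_mul_sinh_le (hx : 0 ≤ x) :
    2 * x + x * cosh x - 3 * sinh x ≤ 2 / 27 * (x ^ 3 * (cosh x - 1)) := by
  have hcoeff (n : ℕ) : (2 * n + 2 : ℝ) / (2 * n + 5)! ≤ 2 / 27 / (2 * n + 2)! := by
    have hpoly : (2 * n + 2 : ℝ) ≤ 2 / 27 * ((2 * n + 5) * (2 * n + 4) * (2 * n + 3)) := by
      have hn : (0 : ℝ) ≤ n := n.cast_nonneg
      nlinarith [pow_nonneg hn 3]
    rw [show 2 * n + 5 = 2 * n + 2 + 1 + 1 + 1 by ring, factorial_succ, factorial_succ,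
      factorial_succ, div_le_div_iff₀ (by positivity) (by positivity)]
    push_cast
    linarith [mul_le_mul_of_nonneg_right hpoly (by positivity : (0 : ℝ) ≤ (2 * n + 2)!)]
  refine hasSum_le (fun n => ?_) (hasSum_two_mul_add_mul_cosh_sub_three_mul_sinh x)
    ((hasSum_pow_three_mul_cosh_sub_one x).mul_left (2 / 27))
  calc (2 * n + 2) * x ^ (2 * n + 5) / (2 * n + 5)!
      = (2 * n + 2) / (2 * n + 5)! * x ^ (2 * n + 5) := by ring
    _ ≤ 2 / 27 / (2 * n + 2)! * x ^ (2 * n + 5) :=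
      mul_le_mul_of_nonneg_right (hcoeff n) (by positivity)
    _ = 2 / 27 * (x ^ (2 * n + 5) / (2 * n + 2)!) := by ring

lemma coth_sq_sub_coth_div_eq {t : ℝ} (ht : t ≠ 0) :
    (cosh t / sinh t) ^ 2 - 1 / 3 - cosh t / sinh t / t =
      (2 * (2 * t) + 2 * t * cosh (2 * t) - 3 * sinh (2 * t)) / (6 * t * sinh t ^ 2) := by
  have hs : sinh t ≠ 0 := sinh_ne_zero.2 ht
  rw [sinh_two_mul, cosh_two_mul]
  field_simp
  rw [cosh_sq]
  ring

end Real

theorem simpson_stmt16 (t : ℝ) (ht : 0 < t) :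
    (Real.cosh t / Real.sinh t) ^ 2 - 1 / 3 - 16 / 81 * t ^ 2 ≤
        (Real.cosh t / Real.sinh t) / t ∧
      (Real.cosh t / Real.sinh t) / t ≤ (Real.cosh t / Real.sinh t) ^ 2 - 1 / 3 := by
  have hx : 0 ≤ 2 * t := by positivity
  have hden : 0 < 6 * t * sinh t ^ 2 := by have := sinh_pos_iff.2 ht; positivity
  have hgap := coth_sq_sub_coth_div_eq ht.ne'
  have hupper := sub_nonneg.2 (three_mul_sinh_le hx)
  have hlower : 2 * (2 * t) + 2 * t * cosh (2 * t) - 3 * sinh (2 * t) ≤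
      16 / 81 * t ^ 2 * (6 * t * sinh t ^ 2) :=
    (two_mul_add_mul_cosh_sub_three_mul_sinh_le hx).trans_eq <| by
      rw [cosh_two_mul, cosh_sq]
      ring
  constructor
  · linarith [(div_le_iff₀ hden).2 hlower]
  · linarith [div_nonneg hupper hden.le]
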